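/- Let A be an n×n Boolean matrix, L a list of pairs (U',V') with A[U'×V'] all-zero, such that no pair (U,V) with A[U×V] all-zero satisfies |(U×V) \ ⋃_{(U',V')∈L}(U'×V')| ≥ B (maximality). Then for any query pair (U,V): if |(U×V) \ ⋃_{(U',V')∈L}(U'×V')| ≥ B then A[U×V] contains a one; otherwise A[U×V] contains a one iff some (i,j) in (U×V) \ ⋃_{(U',V')∈L}(U'×V') has A(i,j)=1. -/
import Mathlib


/-- Correctness of the cell probe query algorithm: with `L` a maximal family of all-zero
rectangles each covering `≥ B` new elements, for any query `(U, V)`: if the uncovered part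
`Q` of `U × V` has size `≥ B` then `A[U×V]` contains a one; otherwise `A[U×V]` contains a
one iff some entry of `Q` is a one. -/
theorem stmt13 (n B : ℕ) (hB : 0 < B) (A : Fin n → Fin n → Bool)
    (L : Finset (Finset (Fin n) × Finset (Fin n)))
    (hzero : ∀ p ∈ L, ∀ i ∈ p.1, ∀ j ∈ p.2, A i j = false)
    (hmax : ¬ ∃ U V : Finset (Fin n), (∀ i ∈ U, ∀ j ∈ V, A i j = false) ∧
        B ≤ ((U ×ˢ V) \ L.sup (fun p => p.1 ×ˢ p.2)).card)
    (U V : Finset (Fin n)) :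
    (B ≤ ((U ×ˢ V) \ L.sup (fun p => p.1 ×ˢ p.2)).card →
        ∃ i ∈ U, ∃ j ∈ V, A i j = true) ∧
    (((U ×ˢ V) \ L.sup (fun p => p.1 ×ˢ p.2)).card < B →
        ((∃ i ∈ U, ∃ j ∈ V, A i j = true) ↔
          ∃ p ∈ (U ×ˢ V) \ L.sup (fun p => p.1 ×ˢ p.2), A p.1 p.2 = true)) := by
  constructor
  · intro hcard
    by_contra h
    push_neg at h
    exact hmax ⟨U, V, fun i hi j hj => by simpa using h i hi j hj, hcard⟩
  · intro _
    constructor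
    · rintro ⟨i, hi, j, hj, hA⟩
      refine ⟨(i, j), ?_, hA⟩
      rw [Finset.mem_sdiff, Finset.mem_product]
      refine ⟨⟨hi, hj⟩, fun hmem => ?_⟩
      rw [Finset.mem_sup] at hmem
      obtain ⟨p, hp, hij⟩ := hmem
      rw [Finset.mem_product] at hij
      have := hzero p hp i hij.1 j hij.2
      simp [this] at hA
    · rintro ⟨⟨i, j⟩, hmem, hA⟩
      rw [Finset.mem_sdiff, Finset.mem_product] at hmem
      exact ⟨i, hmem.1.1, j, hmem.1.2, hA⟩
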